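/- Let μ₁ > 0, b = 4/μ₁, and μ(λ) = μ₁ √(λ(b−λ))/(2πλ) for λ ∈ (0, b). Then for every λ ∈ (0, b), the Cauchy principal value of ∫₀^b μ(λ′)/(λ−λ′) dλ′ equals μ₁/2; that is, the limit as ε → 0⁺ of ∫₀^{λ−ε} μ(λ′)/(λ−λ′) dλ′ + ∫_{λ+ε}^{b} μ(λ′)/(λ−λ′) dλ′ exists and equals μ₁/2. -/

import Mathlib

open MeasureTheory Real Filter Set intervalIntegral Topology

/-!
Up to the factor `μ₁ / (2π)` the integrand is `√(y (b - y)) / (y (λ - y))`, which splits as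
`1 / √(y (b - y)) + (b - λ) / ((λ - y) √(y (b - y)))`. The first term has antiderivative
`2 arcsin √(y / b)`, the second
`√((b - λ) / λ) (2 log (√(λ (b - y)) + √(y (b - λ))) - log |λ - y|)`.
The only singular part, `log |λ - y|`, is even about `λ` and cancels between the two one-sided
integrals, so the principal value is the total increase `π` of the arcsine term; the logarithm
takes the same value `log b` at both endpoints.
-/

namespace MarchenkoPastur

variable {b lam y : ℝ}

lemma sqrt_add_sqrt_pos (hl : 0 < lam) (hlb : lam < b) (y : ℝ) :
    0 < √(lam * (b - y)) + √(y * (b - lam)) := by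
  rcases lt_or_ge y b with h | h
  · exact add_pos_of_pos_of_nonneg (sqrt_pos.2 (by nlinarith)) (sqrt_nonneg _)
  · exact add_pos_of_nonneg_of_pos (sqrt_nonneg _) (sqrt_pos.2 (by nlinarith))

lemma hasDerivAt_two_mul_arcsin_sqrt_div (hy : 0 < y) (hyb : y < b) :
    HasDerivAt (fun y => 2 * arcsin √(y / b)) (1 / √(y * (b - y))) y := by
  have hb : 0 < b := hy.trans hyb
  have hyb_div : y / b < 1 := (div_lt_one hb).2 hyb
  have hs : √(y / b) ≠ 1 := by rw [ne_eq, sqrt_eq_one]; exact hyb_div.ne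
  have hs' : √(y / b) ≠ -1 := by linarith [sqrt_nonneg (y / b)]
  have h := (hasDerivAt_arcsin hs' hs).comp y
    (((hasDerivAt_id y).div_const b).sqrt (div_pos hy hb).ne')
  have hsplit : √(y * (b - y)) = b * (√(y / b) * √(1 - y / b)) := by
    rw [← sqrt_mul (div_pos hy hb).le, show y * (b - y) = b ^ 2 * (y / b * (1 - y / b)) by
      field_simp, sqrt_mul (sq_nonneg b), sqrt_sq hb.le]
  refine (h.const_mul 2).congr_deriv ?_
  have : 0 < √(1 - y / b) := sqrt_pos.2 (by linarith)
  have : 0 < √(y / b) := sqrt_pos.2 (div_pos hy hb)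
  rw [hsplit, sq_sqrt (div_pos hy hb).le, id]
  field_simp

lemma hasDerivAt_two_mul_log_sqrt_add_sqrt_sub_log (hl : 0 < lam) (hlb : lam < b)
    (hy : 0 < y) (hyb : y < b) (hyl : y ≠ lam) :
    HasDerivAt (fun y => 2 * log (√(lam * (b - y)) + √(y * (b - lam))) - log (lam - y))
      (√(lam * (b - lam)) / ((lam - y) * √(y * (b - y)))) y := by
  have hN := sqrt_add_sqrt_pos hl hlb y
  have hp := (((hasDerivAt_id y).const_sub b).const_mul lam).sqrt
    (mul_pos hl (sub_pos.2 hyb)).ne'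
  have hq := ((hasDerivAt_id y).mul_const (b - lam)).sqrt (mul_pos hy (sub_pos.2 hlb)).ne'
  have h := (((hp.add hq).log hN.ne').const_mul 2).sub
    (((hasDerivAt_id y).const_sub lam).log (sub_ne_zero.2 hyl.symm))
  refine h.congr_deriv ?_
  simp only [Pi.add_apply, id]
  have hu := sq_sqrt hy.le
  have hv := sq_sqrt (sub_pos.2 hyb).le
  have hc := sq_sqrt hl.le
  have hd := sq_sqrt (sub_pos.2 hlb).le
  have : 0 < √y := sqrt_pos.2 hy
  have : 0 < √(b - y) := sqrt_pos.2 (sub_pos.2 hyb)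
  have : 0 < √lam := sqrt_pos.2 hl
  have : 0 < √(b - lam) := sqrt_pos.2 (sub_pos.2 hlb)
  have hly : lam - y ≠ 0 := sub_ne_zero.2 hyl.symm
  simp only [sqrt_mul hl.le, sqrt_mul hy.le] at hN ⊢
  set u := √y
  set v := √(b - y)
  set c := √lam
  set d := √(b - lam)
  rw [← hu, ← hc] at hly ⊢
  rw [← hc] at hd
  rw [← hu] at hv
  field_simp
  linear_combination (c * u * d) * hv + (u ^ 2 * v - c ^ 2 * v - c * u * d) * hd

noncomputable def integrand (b lam y : ℝ) : ℝ :=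
  √(y * (b - y)) / (y * (lam - y))

lemma integrand_eq_add (hl : 0 < lam) (hlb : lam < b) (hy : 0 < y) (hyb : y < b)
    (hyl : y ≠ lam) :
    integrand b lam y = 1 / √(y * (b - y)) +
      √(lam * (b - lam)) / lam * (√(lam * (b - lam)) / ((lam - y) * √(y * (b - y)))) := by
  have hs : 0 < √(y * (b - y)) := sqrt_pos.2 (mul_pos hy (sub_pos.2 hyb))
  have hly : lam - y ≠ 0 := sub_ne_zero.2 hyl.symm
  rw [integrand]
  field_simp
  rw [sq_sqrt (mul_pos hy (sub_pos.2 hyb)).le, sq_sqrt (mul_pos hl (sub_pos.2 hlb)).le]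
  ring

noncomputable def regularPart (b lam y : ℝ) : ℝ :=
  2 * arcsin √(y / b) +
    √(lam * (b - lam)) / lam * (2 * log (√(lam * (b - y)) + √(y * (b - lam))))

noncomputable def antideriv (b lam y : ℝ) : ℝ :=
  regularPart b lam y - √(lam * (b - lam)) / lam * log (lam - y)

lemma hasDerivAt_antideriv (hl : 0 < lam) (hlb : lam < b) (hy : 0 < y) (hyb : y < b)
    (hyl : y ≠ lam) : HasDerivAt (antideriv b lam) (integrand b lam y) y := by
  have h := (hasDerivAt_two_mul_arcsin_sqrt_div hy hyb).add
    ((hasDerivAt_two_mul_log_sqrt_add_sqrt_sub_log hl hlb hy hyb hyl).const_mul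
      (√(lam * (b - lam)) / lam))
  have heq : antideriv b lam = fun y => 2 * arcsin √(y / b) + √(lam * (b - lam)) / lam *
      (2 * log (√(lam * (b - y)) + √(y * (b - lam))) - log (lam - y)) := by
    funext y
    simp only [antideriv, regularPart]
    ring
  rw [heq, integrand_eq_add hl hlb hy hyb hyl]
  exact h

lemma continuous_regularPart (hl : 0 < lam) (hlb : lam < b) : Continuous (regularPart b lam) := by
  unfold regularPart
  have := fun y => (sqrt_add_sqrt_pos hl hlb y).ne'
  fun_prop (disch := assumption)

lemma continuousAt_antideriv (hl : 0 < lam) (hlb : lam < b) (hyl : y ≠ lam) :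
    ContinuousAt (antideriv b lam) y :=
  (continuous_regularPart hl hlb).continuousAt.sub
    (continuousAt_const.mul
      ((continuousAt_const.sub continuousAt_id).log (sub_ne_zero.2 hyl.symm)))

lemma antideriv_sub_antideriv_zero (hl : 0 < lam) (hlb : lam < b) :
    antideriv b lam b - antideriv b lam 0 = π := by
  have hb : 0 < b := hl.trans hlb
  simp only [antideriv, regularPart, div_self hb.ne', sqrt_one, arcsin_one, sub_self, mul_zero,
    sqrt_zero, zero_div, zero_mul, arcsin_zero, add_zero, zero_add, sub_zero]
  rw [log_sqrt (mul_pos hb (sub_pos.2 hlb)).le, log_sqrt (mul_pos hl hb).le,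
    log_mul hb.ne' (sub_pos.2 hlb).ne', log_mul hl.ne' hb.ne', ← neg_sub b lam, log_neg_eq_log]
  ring

lemma antideriv_sub_sub_antideriv_add (ε : ℝ) :
    antideriv b lam (lam - ε) - antideriv b lam (lam + ε) =
      regularPart b lam (lam - ε) - regularPart b lam (lam + ε) := by
  simp only [antideriv, sub_sub_cancel, sub_add_cancel_left, log_neg_eq_log]
  ring

lemma integral_integrand_of_lt (hl : 0 < lam) (hlb : lam < b) {t : ℝ} (ht : 0 ≤ t)
    (htl : t < lam) : ∫ x in 0..t, integrand b lam x = antideriv b lam t - antideriv b lam 0 := by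
  have hcont : ContinuousOn (antideriv b lam) (Icc 0 t) := fun x hx =>
    (continuousAt_antideriv hl hlb (by linarith [hx.2])).continuousWithinAt
  have hderiv : ∀ x ∈ Ioo 0 t, HasDerivAt (antideriv b lam) (integrand b lam x) x :=
    fun x hx => hasDerivAt_antideriv hl hlb hx.1 (by linarith [hx.2]) (by linarith [hx.2])
  have hnonneg : ∀ x ∈ Ioo 0 t, 0 ≤ integrand b lam x := fun x hx => by
    have : 0 < lam - x := by linarith [hx.2]
    have := hx.1
    unfold integrand
    positivity
  refine integral_eq_sub_of_hasDerivAt_of_le ht hcont hderiv ?_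
  exact intervalIntegrable_deriv_of_nonneg (by rwa [uIcc_of_le ht])
    (by rwa [min_eq_left ht, max_eq_right ht]) (by rwa [min_eq_left ht, max_eq_right ht])

lemma integral_integrand_of_gt (hl : 0 < lam) (hlb : lam < b) {t : ℝ} (hlt : lam < t)
    (htb : t ≤ b) : ∫ x in t..b, integrand b lam x = antideriv b lam b - antideriv b lam t := by
  refine integral_eq_sub_of_hasDerivAt_of_le htb
    (fun x hx => (continuousAt_antideriv hl hlb (by linarith [hx.1])).continuousWithinAt)
    (fun x hx => hasDerivAt_antideriv hl hlb (by linarith [hx.1]) hx.2 (by linarith [hx.1]))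
    (ContinuousOn.intervalIntegrable ?_)
  rw [uIcc_of_le htb]
  unfold integrand
  exact ContinuousOn.div (by fun_prop) (by fun_prop)
    fun x hx => mul_ne_zero (by linarith [hx.1]) (by linarith [hx.1])

theorem tendsto_integral_integrand_add (hl : 0 < lam) (hlb : lam < b) :
    Tendsto (fun ε =>
        (∫ x in 0..lam - ε, integrand b lam x) + ∫ x in lam + ε..b, integrand b lam x)
      (𝓝[>] 0) (𝓝 π) := by
  have hev : ∀ᶠ ε in 𝓝[>] (0 : ℝ),
      π + (regularPart b lam (lam - ε) - regularPart b lam (lam + ε)) =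
        (∫ x in 0..lam - ε, integrand b lam x) + ∫ x in lam + ε..b, integrand b lam x := by
    filter_upwards [Ioo_mem_nhdsGT (lt_min hl (sub_pos.2 hlb))] with ε ⟨hε, hεm⟩
    rw [integral_integrand_of_lt hl hlb (by linarith [min_le_left lam (b - lam)]) (by linarith),
      integral_integrand_of_gt hl hlb (by linarith) (by linarith [min_le_right lam (b - lam)]),
      ← antideriv_sub_antideriv_zero hl hlb, ← antideriv_sub_sub_antideriv_add]
    ring
  refine Tendsto.congr' hev ?_
  have hR := (continuous_regularPart hl hlb).tendsto lam
  have hminus : Tendsto (fun ε => lam - ε) (𝓝[>] 0) (𝓝 lam) := by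
    simpa using tendsto_nhdsWithin_of_tendsto_nhds ((continuous_sub_left lam).tendsto 0)
  have hplus : Tendsto (fun ε => lam + ε) (𝓝[>] 0) (𝓝 lam) := by
    simpa using tendsto_nhdsWithin_of_tendsto_nhds ((continuous_const_add lam).tendsto 0)
  simpa using tendsto_const_nhds.add ((hR.comp hminus).sub (hR.comp hplus))

end MarchenkoPastur

theorem marchenko_pastur_principal_value_general (μ₁ : ℝ)
    (b : ℝ)
    (μ : ℝ → ℝ)
    (hμ : ∀ lam : ℝ, μ lam = μ₁ * Real.sqrt (lam * (b - lam)) / (2 * Real.pi * lam)) :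
    ∀ lam ∈ Set.Ioo (0:ℝ) b,
      Filter.Tendsto
        (fun ε : ℝ =>
          (∫ x in (0:ℝ)..(lam - ε), μ x / (lam - x)) +
          ∫ x in (lam + ε)..b, μ x / (lam - x))
        (nhdsWithin 0 (Set.Ioi 0)) (nhds (μ₁ / 2)) := by
  rintro lam ⟨hl, hlb⟩
  have hμ_div : ∀ x, μ x / (lam - x) = μ₁ / (2 * π) * MarchenkoPastur.integrand b lam x :=
    fun x => by rw [hμ, MarchenkoPastur.integrand, div_div, div_mul_div_comm, mul_assoc (2 * π)]
  simp_rw [hμ_div, intervalIntegral.integral_const_mul, ← mul_add]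
  convert (MarchenkoPastur.tendsto_integral_integrand_add hl hlb).const_mul (μ₁ / (2 * π))
    using 2
  field_simp

theorem marchenko_pastur_principal_value (μ₁ : ℝ) (hμ₁ : 0 < μ₁)
    (b : ℝ) (hb : b = 4 / μ₁)
    (μ : ℝ → ℝ)
    (hμ : ∀ lam : ℝ, μ lam = μ₁ * Real.sqrt (lam * (b - lam)) / (2 * Real.pi * lam)) :
    ∀ lam ∈ Set.Ioo (0:ℝ) b,
      Filter.Tendsto
        (fun ε : ℝ =>
          (∫ x in (0:ℝ)..(lam - ε), μ x / (lam - x)) +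
          ∫ x in (lam + ε)..b, μ x / (lam - x))
        (nhdsWithin 0 (Set.Ioi 0)) (nhds (μ₁ / 2)) :=
  marchenko_pastur_principal_value_general μ₁ b μ hμ
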